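/- Let κ be a regular uncountable cardinal, θ < κ an infinite regular cardinal, S ⊆ κ a set of limit ordinals, and Ā = ⟨A_δ : δ ∈ S⟩, h̄ = ⟨h_δ : δ ∈ S⟩ sequences with A_δ ⊆ δ, |A_δ| < θ, sup(A_δ) = δ and h_δ : A_δ → θ. Let δ₀ < κ be a limit ordinal and ⟨g_i : i < δ₀⟩ a ≤-increasing sequence of conditions of the forcing notion Q^{S,θ}_{Ā,h̄} such that the supremum of the domains of the g_i is not in S. Then the union ⋃_{i<δ₀} g_i is a condition of Q^{S,θ}_{Ā,h̄}, hence an upper bound of the sequence. -/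

import Mathlib

/-!
The `g i` are pairwise compatible, so their union is a function on the supremum `β*` of the
domains, and `β* < κ` by regularity of `κ`. Since `β* ∉ S`, every `δ ∈ S` with `δ ≤ β*` lies
below some `β i`; as `A δ ⊆ δ`, the union agrees with `g i` on `A δ`, so the requirement at `δ`
is inherited from the condition `g i`.
-/

/-- Conditions of the forcing notion `Q^{S,θ}_{Ā,h̄}`: pairs `(β, g)` with `β < κ`
representing a function `g : β → θ` such that for every `δ ∈ S` with `δ ≤ β` the set
`{ξ ∈ A_δ : h_δ ξ ≠ g ξ}` is bounded below `δ`. -/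
def QSCond (κo θo : Ordinal.{0}) (S : Set Ordinal.{0}) (A : Ordinal.{0} → Set Ordinal.{0})
    (h : Ordinal.{0} → Ordinal.{0} → Ordinal.{0})
    (β : Ordinal.{0}) (g : Ordinal.{0} → Ordinal.{0}) : Prop :=
  β < κo ∧ (∀ ξ < β, g ξ < θo) ∧
    ∀ δ ∈ S, δ ≤ β → ∃ γ < δ, ∀ ξ ∈ A δ, h δ ξ ≠ g ξ → ξ ≤ γ

/-- The order of `Q^{S,θ}_{Ā,h̄}` is extension of functions. -/
def QSLe (β₀ : Ordinal.{0}) (g₀ : Ordinal.{0} → Ordinal.{0})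
    (β₁ : Ordinal.{0}) (g₁ : Ordinal.{0} → Ordinal.{0}) : Prop :=
  β₀ ≤ β₁ ∧ ∀ ξ < β₀, g₁ ξ = g₀ ξ

open Ordinal

section Chain

variable {δ₀ : Ordinal.{u}} {β : Ordinal.{u} → Ordinal.{u}} {γ : Type*} [Inhabited γ]
  {g : Ordinal.{u} → Ordinal.{u} → γ}

noncomputable def chainSup (δ₀ : Ordinal.{u}) (β : Ordinal.{u} → Ordinal.{u}) : Ordinal.{u} :=
  sSup {x | ∃ i < δ₀, x = β i}

theorem chainDomains_eq_image : {x | ∃ i < δ₀, x = β i} = β '' Set.Iio δ₀ := by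
  ext x; simp [eq_comm]

theorem bddAbove_chainDomains : BddAbove {x | ∃ i < δ₀, x = β i} := by
  rw [chainDomains_eq_image]
  exact bddAbove_of_small

theorem lt_chainSup_iff {ξ : Ordinal.{u}} : ξ < chainSup δ₀ β ↔ ∃ i < δ₀, ξ < β i := by
  simp [chainSup, lt_csSup_iff' bddAbove_chainDomains]

theorem le_chainSup {i : Ordinal.{u}} (hi : i < δ₀) : β i ≤ chainSup δ₀ β :=
  le_csSup bddAbove_chainDomains ⟨i, hi, rfl⟩

theorem chainSup_lt_of_card_lt_cof {c : Ordinal.{u}} (hδ₀ : δ₀.card < c.cof)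
    (hβ : ∀ i < δ₀, β i < c) : chainSup δ₀ β < c := by
  rw [chainSup, chainDomains_eq_image]
  refine sSup_lt_of_lt_cof ?_ (by simpa using hβ)
  calc Cardinal.mk (β '' Set.Iio δ₀) ≤ Cardinal.mk (Set.Iio δ₀) := Cardinal.mk_image_le
    _ = Cardinal.lift.{u + 1} δ₀.card := Cardinal.mk_Iio_ordinal δ₀
    _ < (Ordinal.lift.{u + 1} c).cof := by rwa [← lift_cof, Cardinal.lift_lt]

noncomputable def chainUnion (δ₀ : Ordinal.{u}) (β : Ordinal.{u} → Ordinal.{u})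
    (g : Ordinal.{u} → Ordinal.{u} → γ) (ξ : Ordinal.{u}) : γ :=
  open Classical in
  if hξ : ∃ i < δ₀, ξ < β i then g hξ.choose ξ else default

theorem chainUnion_eq (hmono : ∀ i j, i ≤ j → j < δ₀ → ∀ ξ < β i, g j ξ = g i ξ)
    {i ξ : Ordinal.{u}} (hi : i < δ₀) (hξ : ξ < β i) : chainUnion δ₀ β g ξ = g i ξ := by
  have hex : ∃ j < δ₀, ξ < β j := ⟨i, hi, hξ⟩
  rw [chainUnion, dif_pos hex]
  obtain ⟨hj, hξj⟩ := hex.choose_spec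
  rcases le_total hex.choose i with hle | hle
  · exact (hmono _ i hle hi ξ hξj).symm
  · exact hmono i _ hle hj ξ hξ

end Chain

section Forcing

variable {κo θo : Ordinal.{0}} {S : Set Ordinal.{0}} {A : Ordinal.{0} → Set Ordinal.{0}}
  {h : Ordinal.{0} → Ordinal.{0} → Ordinal.{0}} {δ₀ : Ordinal.{0}}
  {β : Ordinal.{0} → Ordinal.{0}} {g : Ordinal.{0} → Ordinal.{0} → Ordinal.{0}}

theorem qsLe_chainUnion (hmono : ∀ i j, i ≤ j → j < δ₀ → QSLe (β i) (g i) (β j) (g j))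
    {i : Ordinal.{0}} (hi : i < δ₀) :
    QSLe (β i) (g i) (chainSup δ₀ β) (chainUnion δ₀ β g) :=
  ⟨le_chainSup hi, fun _ hξ => chainUnion_eq (fun i j hij hj => (hmono i j hij hj).2) hi hξ⟩

theorem qsCond_chainUnion (hmono : ∀ i j, i ≤ j → j < δ₀ → QSLe (β i) (g i) (β j) (g j))
    (hcond : ∀ i < δ₀, QSCond κo θo S A h (β i) (g i)) (hA : ∀ δ ∈ S, ∀ ξ ∈ A δ, ξ < δ)
    (hδ₀ : δ₀.card < κo.cof) (hsup : chainSup δ₀ β ∉ S) :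
    QSCond κo θo S A h (chainSup δ₀ β) (chainUnion δ₀ β g) := by
  have hunion : ∀ {i ξ}, i < δ₀ → ξ < β i → chainUnion δ₀ β g ξ = g i ξ :=
    chainUnion_eq fun i j hij hj => (hmono i j hij hj).2
  refine ⟨chainSup_lt_of_card_lt_cof hδ₀ fun i hi => (hcond i hi).1, fun ξ hξ => ?_,
    fun δ hδ hδle => ?_⟩
  · obtain ⟨i, hi, hξi⟩ := lt_chainSup_iff.1 hξ
    rw [hunion hi hξi]
    exact (hcond i hi).2.1 ξ hξi
  · obtain ⟨i, hi, hδi⟩ :=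
      lt_chainSup_iff.1 (hδle.lt_of_ne fun hδeq => hsup (hδeq ▸ hδ))
    obtain ⟨γ, hγ, hbound⟩ := (hcond i hi).2.2 δ hδ hδi.le
    refine ⟨γ, hγ, fun ξ hξA hξne => hbound ξ hξA ?_⟩
    rwa [hunion hi ((hA δ hδ ξ hξA).trans hδi)] at hξne

end Forcing

theorem stmt13_general (κ θ : Cardinal.{0}) (hκreg : κ.IsRegular)
    (S : Set Ordinal.{0})
    (A : Ordinal.{0} → Set Ordinal.{0})
    (hA : ∀ δ ∈ S, (∀ ξ ∈ A δ, ξ < δ) ∧ Cardinal.mk (A δ) < Cardinal.lift.{1} θ ∧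
      sSup (A δ) = δ)
    (h : Ordinal.{0} → Ordinal.{0} → Ordinal.{0})
    (δ₀ : Ordinal.{0}) (hδ₀ : δ₀ < κ.ord)
    (β : Ordinal.{0} → Ordinal.{0}) (g : Ordinal.{0} → Ordinal.{0} → Ordinal.{0})
    (hcond : ∀ i < δ₀, QSCond κ.ord θ.ord S A h (β i) (g i))
    (hmono : ∀ i j : Ordinal.{0}, i ≤ j → j < δ₀ → QSLe (β i) (g i) (β j) (g j))
    (hsup : sSup {x : Ordinal.{0} | ∃ i < δ₀, x = β i} ∉ S) :
    ∃ g' : Ordinal.{0} → Ordinal.{0},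
      QSCond κ.ord θ.ord S A h (sSup {x : Ordinal.{0} | ∃ i < δ₀, x = β i}) g' ∧
      ∀ i < δ₀, QSLe (β i) (g i) (sSup {x : Ordinal.{0} | ∃ j < δ₀, x = β j}) g' := by
  have hcof : δ₀.card < κ.ord.cof := by rwa [hκreg.cof_ord, ← Cardinal.lt_ord]
  exact ⟨chainUnion δ₀ β g,
    qsCond_chainUnion hmono hcond (fun δ hδ => (hA δ hδ).1) hcof hsup,
    fun i hi => qsLe_chainUnion hmono hi⟩

/-- Let `κ` be regular uncountable, `θ < κ` infinite regular, `S ⊆ κ` a set of limit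
ordinals, `A_δ ⊆ δ` of cardinality `< θ` with `sup A_δ = δ`, and `h_δ : A_δ → θ`
(for `δ ∈ S`).  If `⟨g_i : i < δ₀⟩` is a `≤`-increasing sequence of conditions of
`Q^{S,θ}_{Ā,h̄}` with `δ₀ < κ` limit such that the supremum of the domains is not in `S`,
then the union of the `g_i` is a condition, hence an upper bound of the sequence. -/
theorem stmt13 (κ θ : Cardinal.{0}) (hκreg : κ.IsRegular) (hκunc : Cardinal.aleph0 < κ)
    (hθreg : θ.IsRegular) (hθinf : Cardinal.aleph0 ≤ θ) (hθκ : θ < κ)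
    (S : Set Ordinal.{0}) (hS : ∀ δ ∈ S, δ < κ.ord ∧ Order.IsSuccLimit δ)
    (A : Ordinal.{0} → Set Ordinal.{0})
    (hA : ∀ δ ∈ S, (∀ ξ ∈ A δ, ξ < δ) ∧ Cardinal.mk (A δ) < Cardinal.lift.{1} θ ∧
      sSup (A δ) = δ)
    (h : Ordinal.{0} → Ordinal.{0} → Ordinal.{0})
    (hh : ∀ δ ∈ S, ∀ ξ ∈ A δ, h δ ξ < θ.ord)
    (δ₀ : Ordinal.{0}) (hlim : Order.IsSuccLimit δ₀) (hδ₀ : δ₀ < κ.ord)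
    (β : Ordinal.{0} → Ordinal.{0}) (g : Ordinal.{0} → Ordinal.{0} → Ordinal.{0})
    (hcond : ∀ i < δ₀, QSCond κ.ord θ.ord S A h (β i) (g i))
    (hmono : ∀ i j : Ordinal.{0}, i ≤ j → j < δ₀ → QSLe (β i) (g i) (β j) (g j))
    (hsup : sSup {x : Ordinal.{0} | ∃ i < δ₀, x = β i} ∉ S) :
    ∃ g' : Ordinal.{0} → Ordinal.{0},
      QSCond κ.ord θ.ord S A h (sSup {x : Ordinal.{0} | ∃ i < δ₀, x = β i}) g' ∧
      ∀ i < δ₀, QSLe (β i) (g i) (sSup {x : Ordinal.{0} | ∃ j < δ₀, x = β j}) g' :=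
  stmt13_general κ θ hκreg S A hA h δ₀ hδ₀ β g hcond hmono hsup
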